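/- If a formal power series valued function X(μ₁,μ₂,μ₃), symmetric under cyclic permutation of its three partition arguments, satisfies the condensation recurrence q^A·X(μ₁,μ₂,μ₃)·X(μ₁^{rc},μ₂^{rc},μ₃) = q^B·X(μ₁^{rc},μ₂,μ₃)·X(μ₁,μ₂^{rc},μ₃) + q^C·X(μ₁^r,μ₂^c,μ₃)·X(μ₁^c,μ₂^r,μ₃) (for fixed exponents A,B,C depending on the arguments), and X is a power series with nonzero constant term in all instances, then X is uniquely determined by its values X(μ₁,μ₂,∅) on triples with third partition empty. Formally: two cyclically symmetric solutions X, Y of the recurrence with invertible values that agree whenever some argument is empty agree everywhere. -/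

import Mathlib

/-!
STATEMENT 16. Uniqueness of solutions of the condensation recurrence: a
cyclically symmetric, power-series valued function X(μ₁,μ₂,μ₃) of three
partitions with invertible values (nonzero constant term) satisfying
q^A·X(μ₁,μ₂,μ₃)·X(μ₁^{rc},μ₂^{rc},μ₃)
  = q^B·X(μ₁^{rc},μ₂,μ₃)·X(μ₁,μ₂^{rc},μ₃) + q^C·X(μ₁^r,μ₂^c,μ₃)·X(μ₁^c,μ₂^r,μ₃)
(for all μ₁, μ₂ nonempty) is determined by its values on triples whose third
argument is empty: two such solutions agreeing there agree everywhere.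

Since A, B, C take values in ℤ, the recurrence is stated in the Laurent series
ring K((q)) = HahnSeries ℤ K, with q^A = single A 1 and power series
coerced in.  The operations μ ↦ μ^r, μ^c, μ^{rc} are given, together with the
size inequalities (proved elsewhere, cf. Statements 3 and 17) that drive the
induction on |μ₁| + |μ₂| + |μ₃|.
-/

/-- Partitions: antitone, eventually-zero functions ℕ → ℕ. -/
def P : Type := {f : ℕ → ℕ // Antitone f ∧ ∃ N, ∀ n, N ≤ n → f n = 0}

/-- The empty partition. -/
def Pzero : P := ⟨fun _ => 0, fun _ _ _ => le_rfl, 0, fun _ _ => rfl⟩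

/-- Size of a partition (sum of its parts; a finite sum). -/
noncomputable def psize (μ : P) : ℕ := ∑' n, μ.1 n

/-!
Induction on |μ₁| + |μ₂| + |μ₃|. By cyclic symmetry a triple with an empty entry can be rotated
so that its third entry is empty, where X and Y agree by assumption. Otherwise μ₁ and μ₂ are
nonempty, and the recurrence expresses q^A · X(μ₁,μ₂,μ₃) · X(μ₁^{rc},μ₂^{rc},μ₃) through five
values at triples of smaller size; since X(μ₁^{rc},μ₂^{rc},μ₃) is a unit, X(μ₁,μ₂,μ₃) is determined.
-/

theorem eq_of_cyclic_of_base_of_step {α β : Type*} (z : α) (size : α → ℕ)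
    (X Y : α → α → α → β)
    (hXsym : ∀ a b c, X a b c = X b c a) (hYsym : ∀ a b c, Y a b c = Y b c a)
    (hbase : ∀ a b, X a b z = Y a b z)
    (hstep : ∀ a b c, a ≠ z → b ≠ z →
      (∀ a' b' c', size a' + size b' + size c' < size a + size b + size c →
        X a' b' c' = Y a' b' c') →
      X a b c = Y a b c) :
    X = Y := by
  suffices h : ∀ n a b c, size a + size b + size c = n → X a b c = Y a b c by
    funext a b c
    exact h _ a b c rfl
  intro n
  induction n using Nat.strong_induction_on with
  | _ n ih =>
    intro a b c hn
    by_cases hc : c = z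
    · exact hc ▸ hbase a b
    by_cases ha : a = z
    · rw [ha, hXsym, hYsym]
      exact hbase b c
    by_cases hb : b = z
    · rw [hb, hXsym, hXsym, hYsym, hYsym]
      exact hbase c a
    exact hstep a b c ha hb fun a' b' c' h => ih _ (hn ▸ h) a' b' c' rfl

theorem ofPowerSeries_ne_zero_of_constantCoeff_ne_zero {R : Type*} [Semiring R]
    {f : PowerSeries R} (hf : PowerSeries.constantCoeff f ≠ 0) :
    (f : LaurentSeries R) ≠ 0 :=
  (map_ne_zero_iff _ HahnSeries.ofPowerSeries_injective).mpr fun h => hf (by simp [h])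

theorem condensation_uniqueness_general (K : Type*) [Field K]
    (opR opC opRC : P → P)
    -- size facts for the Maya-diagram operations (cf. Statements 3 and 17):
    (hRC : ∀ μ, μ ≠ Pzero → psize (opRC μ) < psize μ)
    (hR : ∀ μ, μ ≠ Pzero → psize (opR μ) < psize μ)
    (hC : ∀ μ, μ ≠ Pzero → psize (opC μ) ≤ psize μ)
    (A B C : P → P → P → ℤ)
    (X Y : P → P → P → PowerSeries K)
    -- invertible values: nonzero constant term
    (hY0 : ∀ μ₁ μ₂ μ₃, PowerSeries.constantCoeff (R := K) (Y μ₁ μ₂ μ₃) ≠ 0)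
    -- cyclic symmetry
    (hXsym : ∀ μ₁ μ₂ μ₃, X μ₁ μ₂ μ₃ = X μ₂ μ₃ μ₁)
    (hYsym : ∀ μ₁ μ₂ μ₃, Y μ₁ μ₂ μ₃ = Y μ₂ μ₃ μ₁)
    -- the condensation recurrence, for μ₁, μ₂ nonempty
    (hXrec : ∀ μ₁ μ₂ μ₃, μ₁ ≠ Pzero → μ₂ ≠ Pzero →
      (HahnSeries.single (A μ₁ μ₂ μ₃) (1 : K)) *
          ((X μ₁ μ₂ μ₃ : LaurentSeries K) * (X (opRC μ₁) (opRC μ₂) μ₃ : LaurentSeries K)) =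
        (HahnSeries.single (B μ₁ μ₂ μ₃) (1 : K)) *
            ((X (opRC μ₁) μ₂ μ₃ : LaurentSeries K) * (X μ₁ (opRC μ₂) μ₃ : LaurentSeries K)) +
          (HahnSeries.single (C μ₁ μ₂ μ₃) (1 : K)) *
            ((X (opR μ₁) (opC μ₂) μ₃ : LaurentSeries K) * (X (opC μ₁) (opR μ₂) μ₃ : LaurentSeries K)))
    (hYrec : ∀ μ₁ μ₂ μ₃, μ₁ ≠ Pzero → μ₂ ≠ Pzero →
      (HahnSeries.single (A μ₁ μ₂ μ₃) (1 : K)) *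
          ((Y μ₁ μ₂ μ₃ : LaurentSeries K) * (Y (opRC μ₁) (opRC μ₂) μ₃ : LaurentSeries K)) =
        (HahnSeries.single (B μ₁ μ₂ μ₃) (1 : K)) *
            ((Y (opRC μ₁) μ₂ μ₃ : LaurentSeries K) * (Y μ₁ (opRC μ₂) μ₃ : LaurentSeries K)) +
          (HahnSeries.single (C μ₁ μ₂ μ₃) (1 : K)) *
            ((Y (opR μ₁) (opC μ₂) μ₃ : LaurentSeries K) * (Y (opC μ₁) (opR μ₂) μ₃ : LaurentSeries K)))
    -- base case: agreement when some argument is empty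
    (hbase : ∀ μ₁ μ₂, X μ₁ μ₂ Pzero = Y μ₁ μ₂ Pzero) :
    X = Y := by
  refine eq_of_cyclic_of_base_of_step Pzero psize X Y hXsym hYsym hbase ?_
  intro μ₁ μ₂ μ₃ h₁ h₂ ih
  have rc₁ := hRC μ₁ h₁
  have rc₂ := hRC μ₂ h₂
  have r₁ := hR μ₁ h₁
  have r₂ := hR μ₂ h₂
  have c₁ := hC μ₁ h₁
  have c₂ := hC μ₂ h₂
  have smaller : ∀ ν₁ ν₂, psize ν₁ + psize ν₂ < psize μ₁ + psize μ₂ →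
      X ν₁ ν₂ μ₃ = Y ν₁ ν₂ μ₃ :=
    fun ν₁ ν₂ h => ih ν₁ ν₂ μ₃ (by omega)
  have hx := hXrec μ₁ μ₂ μ₃ h₁ h₂
  rw [smaller (opRC μ₁) (opRC μ₂) (by omega), smaller (opRC μ₁) μ₂ (by omega),
    smaller μ₁ (opRC μ₂) (by omega), smaller (opR μ₁) (opC μ₂) (by omega),
    smaller (opC μ₁) (opR μ₂) (by omega)] at hx
  have hq : (HahnSeries.single (A μ₁ μ₂ μ₃) (1 : K) : LaurentSeries K) ≠ 0 :=
    HahnSeries.single_ne_zero one_ne_zero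
  exact HahnSeries.ofPowerSeries_injective <|
    mul_right_cancel₀ (ofPowerSeries_ne_zero_of_constantCoeff_ne_zero (hY0 _ _ _)) <|
      mul_left_cancel₀ hq (hx.trans (hYrec μ₁ μ₂ μ₃ h₁ h₂).symm)

theorem condensation_uniqueness (K : Type*) [Field K]
    (opR opC opRC : P → P)
    -- size facts for the Maya-diagram operations (cf. Statements 3 and 17):
    (hRC : ∀ μ, μ ≠ Pzero → psize (opRC μ) < psize μ)
    (hR : ∀ μ, μ ≠ Pzero → psize (opR μ) < psize μ)
    (hC : ∀ μ, μ ≠ Pzero → psize (opC μ) ≤ psize μ)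
    (A B C : P → P → P → ℤ)
    (X Y : P → P → P → PowerSeries K)
    -- invertible values: nonzero constant term
    (hX0 : ∀ μ₁ μ₂ μ₃, PowerSeries.constantCoeff (R := K) (X μ₁ μ₂ μ₃) ≠ 0)
    (hY0 : ∀ μ₁ μ₂ μ₃, PowerSeries.constantCoeff (R := K) (Y μ₁ μ₂ μ₃) ≠ 0)
    -- cyclic symmetry
    (hXsym : ∀ μ₁ μ₂ μ₃, X μ₁ μ₂ μ₃ = X μ₂ μ₃ μ₁)
    (hYsym : ∀ μ₁ μ₂ μ₃, Y μ₁ μ₂ μ₃ = Y μ₂ μ₃ μ₁)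
    -- the condensation recurrence, for μ₁, μ₂ nonempty
    (hXrec : ∀ μ₁ μ₂ μ₃, μ₁ ≠ Pzero → μ₂ ≠ Pzero →
      (HahnSeries.single (A μ₁ μ₂ μ₃) (1 : K)) *
          ((X μ₁ μ₂ μ₃ : LaurentSeries K) * (X (opRC μ₁) (opRC μ₂) μ₃ : LaurentSeries K)) =
        (HahnSeries.single (B μ₁ μ₂ μ₃) (1 : K)) *
            ((X (opRC μ₁) μ₂ μ₃ : LaurentSeries K) * (X μ₁ (opRC μ₂) μ₃ : LaurentSeries K)) +
          (HahnSeries.single (C μ₁ μ₂ μ₃) (1 : K)) *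
            ((X (opR μ₁) (opC μ₂) μ₃ : LaurentSeries K) * (X (opC μ₁) (opR μ₂) μ₃ : LaurentSeries K)))
    (hYrec : ∀ μ₁ μ₂ μ₃, μ₁ ≠ Pzero → μ₂ ≠ Pzero →
      (HahnSeries.single (A μ₁ μ₂ μ₃) (1 : K)) *
          ((Y μ₁ μ₂ μ₃ : LaurentSeries K) * (Y (opRC μ₁) (opRC μ₂) μ₃ : LaurentSeries K)) =
        (HahnSeries.single (B μ₁ μ₂ μ₃) (1 : K)) *
            ((Y (opRC μ₁) μ₂ μ₃ : LaurentSeries K) * (Y μ₁ (opRC μ₂) μ₃ : LaurentSeries K)) +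
          (HahnSeries.single (C μ₁ μ₂ μ₃) (1 : K)) *
            ((Y (opR μ₁) (opC μ₂) μ₃ : LaurentSeries K) * (Y (opC μ₁) (opR μ₂) μ₃ : LaurentSeries K)))
    -- base case: agreement when some argument is empty
    (hbase : ∀ μ₁ μ₂, X μ₁ μ₂ Pzero = Y μ₁ μ₂ Pzero) :
    X = Y :=
  condensation_uniqueness_general K opR opC opRC hRC hR hC A B C X Y hY0 hXsym hYsym hXrec hYrec
    hbase
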